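/- If p ≤ 1/2 is fixed, then with probability tending to 1 as n → ∞, the random cubical complex Q_2(n,p) contains at least 2 maximal 1-faces. -/

import Mathlib

/-!
Second moment method. An edge `e` is maximal iff all `n - 1` squares through it are absent, so
the number `X` of maximal edges is a sum of `n 2^(n-1)` indicators, each of mean
`q = (1-p)^(n-1) ≥ 2^(1-n)`, whence `E X ≥ n`. Indicators of edges whose square sets are disjoint
are independent, so only pairs of distinct edges on a common square add to `Var X`; two such
edges share at most one square, and an edge shares a square with at most `10 (n-1)` others.
Hence `Var X ≤ E X + 20 (n-1) n 2^(n-1) q^2`, and Chebyshev's inequality gives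
`P(X ≤ 1) ≤ 4 / n + 160 / 2^n`.
-/

open Finset

/-- The 1-skeleton of the `n`-dimensional cube. -/
def cubeGraph (n : ℕ) : SimpleGraph (Fin n → Bool) where
  Adj u v := (Finset.univ.filter fun i => u i ≠ v i).card = 1
  symm := by
    constructor
    intro u v h
    rw [show (Finset.univ.filter fun i => v i ≠ u i)
        = (Finset.univ.filter fun i => u i ≠ v i) from
      Finset.filter_congr fun i _ => ne_comm]
    exact h
  loopless := by
    constructor
    intro u h
    simp at h

instance cubeGraphAdjDec (n : ℕ) : DecidableRel (cubeGraph n).Adj := fun u v =>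
  decidable_of_iff ((Finset.univ.filter fun i => u i ≠ v i).card = 1) Iff.rfl

/-- A 2-face of the `n`-cube in star notation: two free (`none`) coordinates and
`n-2` fixed binary coordinates. Its boundary is a 4-cycle. -/
abbrev TwoFace (n : ℕ) :=
  {x : Fin n → Option Bool // (Finset.univ.filter fun i => x i = none).card = 2}

/-- A vertex `v` of the cube lies on a face `x` (in star notation) iff `v` agrees
with every fixed coordinate of `x`. -/
def inFace {n : ℕ} (x : Fin n → Option Bool) (v : Fin n → Bool) : Prop :=
  ∀ i b, x i = some b → v i = b

instance {n : ℕ} (x : Fin n → Option Bool) (v : Fin n → Bool) : Decidable (inFace x v) := by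
  unfold inFace; infer_instance


/-- The probability, in the random 2-dimensional cubical complex `Q_2(n,p)` (each 2-face
included independently with probability `p`), of seeing exactly the configuration `ω`
of 2-faces. -/
def faceProb (n : ℕ) (p : ℝ) (ω : TwoFace n → Bool) : ℝ :=
  ∏ x : TwoFace n, if ω x then p else 1 - p

/-- The number of maximal 1-faces of the complex with face configuration `ω`: edges of the
`n`-cube contained in no included 2-face. -/
def maximalCount (n : ℕ) (ω : TwoFace n → Bool) : ℕ :=
  ((cubeGraph n).edgeFinset.filter fun e =>
    ∀ x : TwoFace n, ω x = true → ¬ ∀ v, v ∈ e → inFace x.1 v).card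

theorem sum_prod_bernoulli_filter_forall_false {ι : Type*} [Fintype ι] [DecidableEq ι] (p : ℝ)
    (S : Finset ι) :
    ∑ ω ∈ univ.filter (fun ω : ι → Bool => ∀ x ∈ S, ω x = false),
      ∏ x, (if ω x then p else 1 - p) = (1 - p) ^ #S := by
  have hpi : univ.filter (fun ω : ι → Bool => ∀ x ∈ S, ω x = false) =
      Fintype.piFinset fun x => if x ∈ S then {false} else univ := by
    ext ω
    simp only [mem_filter, mem_univ, true_and, Fintype.mem_piFinset]
    refine forall_congr' fun x => ?_
    split_ifs with hx <;> simp [hx]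
  have hfactor : ∀ x, ∑ b ∈ (if x ∈ S then {false} else univ), (if b then p else 1 - p) =
      if x ∈ S then 1 - p else 1 := by
    intro x
    split_ifs <;> simp
  rw [hpi, ← prod_univ_sum (fun x => if x ∈ S then {false} else univ)
      (fun _ b => if b then p else 1 - p),
    prod_congr rfl fun x _ => hfactor x, prod_ite_mem, univ_inter, prod_const]

section SecondMoment

variable {ι α : Type*} [DecidableEq ι] (E : Finset α) (F : α → Finset ι) {r : ℝ}

theorem sum_mul_card_filter {Ω : Type*} [Fintype Ω] (w : Ω → ℝ)
    (P : α → Ω → Prop) [∀ e ω, Decidable (P e ω)] :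
    ∑ ω, w ω * #{e ∈ E | P e ω} = ∑ e ∈ E, ∑ ω ∈ univ.filter (P e), w ω := by
  simp only [natCast_card_filter, mul_sum, mul_boole, sum_filter]
  exact sum_comm

theorem sum_sum_pow_card_union_sub_sq_le [DecidableEq α] (hr : 0 ≤ r) :
    ∑ e ∈ E, ∑ f ∈ E, r ^ #(F e ∪ F f) - (∑ e ∈ E, r ^ #(F e)) ^ 2 ≤
      ∑ e ∈ E, r ^ #(F e) +
        ∑ e ∈ E, ∑ f ∈ E with f ≠ e ∧ ¬Disjoint (F e) (F f), r ^ #(F e ∪ F f) := by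
  have hterm : ∀ e f, r ^ #(F e ∪ F f) - r ^ #(F e) * r ^ #(F f) ≤
      (if f = e then r ^ #(F e) else 0) +
        if f ≠ e ∧ ¬Disjoint (F e) (F f) then r ^ #(F e ∪ F f) else 0 := by
    intro e f
    by_cases hfe : f = e
    · subst hfe
      rw [union_self, if_pos rfl, if_neg fun h => h.1 rfl, add_zero]
      nlinarith [pow_nonneg hr #(F f)]
    by_cases hd : Disjoint (F e) (F f)
    · simp [hfe, hd, card_union_of_disjoint hd, pow_add]
    · rw [if_neg hfe, if_pos ⟨hfe, hd⟩, zero_add]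
      nlinarith [pow_nonneg hr #(F e), pow_nonneg hr #(F f)]
  calc ∑ e ∈ E, ∑ f ∈ E, r ^ #(F e ∪ F f) - (∑ e ∈ E, r ^ #(F e)) ^ 2
      = ∑ e ∈ E, ∑ f ∈ E, (r ^ #(F e ∪ F f) - r ^ #(F e) * r ^ #(F f)) := by
        simp only [sq, sum_mul_sum, ← sum_sub_distrib]
    _ ≤ ∑ e ∈ E, ∑ f ∈ E, ((if f = e then r ^ #(F e) else 0) +
          if f ≠ e ∧ ¬Disjoint (F e) (F f) then r ^ #(F e ∪ F f) else 0) := by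
        gcongr with e _ f _
        exact hterm e f
    _ = _ := by
        simp only [sum_add_distrib, sum_ite_eq', sum_ite_mem, inter_self, sum_filter]

variable [Fintype ι] {w : (ι → Bool) → ℝ}

theorem sum_mul_card_filter_forall_false
    (hw : ∀ S : Finset ι, ∑ ω ∈ univ.filter (fun ω => ∀ x ∈ S, ω x = false), w ω = r ^ #S) :
    ∑ ω, w ω * #{e ∈ E | ∀ x ∈ F e, ω x = false} = ∑ e ∈ E, r ^ #(F e) := by
  rw [sum_mul_card_filter]
  exact sum_congr rfl fun e _ => hw (F e)

theorem sum_mul_card_filter_forall_false_sq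
    (hw : ∀ S : Finset ι, ∑ ω ∈ univ.filter (fun ω => ∀ x ∈ S, ω x = false), w ω = r ^ #S) :
    ∑ ω, w ω * (#{e ∈ E | ∀ x ∈ F e, ω x = false} : ℝ) ^ 2 =
      ∑ e ∈ E, ∑ f ∈ E, r ^ #(F e ∪ F f) := by
  have hsq : ∀ ω : ι → Bool, (#{e ∈ E | ∀ x ∈ F e, ω x = false} : ℝ) ^ 2 =
      #{ef ∈ E ×ˢ E | ∀ x ∈ F ef.1 ∪ F ef.2, ω x = false} := by
    intro ω
    simp only [sq, ← Nat.cast_mul, ← card_product, ← filter_product, mem_union, or_imp,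
      forall_and]
  simp only [hsq, sum_mul_card_filter, sum_product]
  exact sum_congr rfl fun e _ => sum_congr rfl fun f _ => hw _

end SecondMoment

theorem sum_filter_le_mul_sq_le_variance {Ω : Type*} [Fintype Ω] {w X : Ω → ℝ}
    (hw0 : ∀ ω, 0 ≤ w ω) (hw1 : ∑ ω, w ω = 1) {t : ℝ} (ht : t ≤ ∑ ω, w ω * X ω) :
    (∑ ω ∈ univ.filter (fun ω => X ω ≤ t), w ω) * (∑ ω, w ω * X ω - t) ^ 2 ≤
      ∑ ω, w ω * X ω ^ 2 - (∑ ω, w ω * X ω) ^ 2 := by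
  set m := ∑ ω, w ω * X ω
  have hvar : ∑ ω, w ω * (X ω - m) ^ 2 = ∑ ω, w ω * X ω ^ 2 - m ^ 2 := by
    have hexp : ∀ ω, w ω * (X ω - m) ^ 2 = w ω * X ω ^ 2 - 2 * m * (w ω * X ω) + m ^ 2 * w ω :=
      fun ω => by ring
    simp only [hexp, sum_add_distrib, sum_sub_distrib, ← mul_sum, hw1]
    ring
  rw [← hvar, sum_mul]
  calc ∑ ω ∈ univ.filter (fun ω => X ω ≤ t), w ω * (m - t) ^ 2
      ≤ ∑ ω ∈ univ.filter (fun ω => X ω ≤ t), w ω * (X ω - m) ^ 2 := by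
        refine sum_le_sum fun ω hω => mul_le_mul_of_nonneg_left ?_ (hw0 ω)
        have hXt : X ω ≤ t := (mem_filter.1 hω).2
        nlinarith
    _ ≤ ∑ ω, w ω * (X ω - m) ^ 2 :=
        sum_le_sum_of_subset_of_nonneg (filter_subset _ _)
          fun ω _ _ => mul_nonneg (hw0 ω) (sq_nonneg _)

theorem le_four_div_add_four_mul_of_mul_sub_one_sq_le {P m c : ℝ} (hm : 2 ≤ m) (hc : 0 ≤ c)
    (h : P * (m - 1) ^ 2 ≤ m + c * m ^ 2) : P ≤ 4 / m + 4 * c := by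
  have hpos : 0 < (m - 1) ^ 2 := pow_pos (by linarith) 2
  calc P ≤ (m + c * m ^ 2) / (m - 1) ^ 2 := (le_div_iff₀ hpos).2 h
    _ ≤ (m + c * m ^ 2) / (m ^ 2 / 4) :=
        div_le_div_of_nonneg_left (by positivity) (by positivity) (by nlinarith)
    _ = 4 / m + 4 * c := by field_simp

section CubeGraph

variable {n : ℕ}

theorem cubeGraph_adj_iff {u v : Fin n → Bool} :
    (cubeGraph n).Adj u v ↔ ∃ i, v = Function.update u i (!u i) := by
  change #{i | u i ≠ v i} = 1 ↔ _
  simp only [card_eq_one, Finset.ext_iff, funext_iff, mem_filter, mem_univ, true_and,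
    mem_singleton]
  refine exists_congr fun i => forall_congr' fun j => ?_
  by_cases hj : j = i
  · subst hj
    cases u j <;> cases v j <;> simp
  · simp only [hj, iff_false, ne_eq, not_not, Function.update_of_ne hj]
    exact eq_comm

theorem cubeGraph_degree (v : Fin n → Bool) : (cubeGraph n).degree v = n := by
  have hnbr : (cubeGraph n).neighborFinset v = univ.image fun i => Function.update v i (!v i) := by
    ext w
    simp [cubeGraph_adj_iff, eq_comm]
  have hinj : Function.Injective fun i => Function.update v i (!v i) := by
    intro i j hij
    by_contra hne
    have hi := congrFun hij i
    simp only [Function.update_self, Function.update_of_ne hne] at hi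
    exact Bool.not_ne_self _ hi
  rw [← SimpleGraph.card_neighborFinset_eq_degree, hnbr, card_image_of_injective _ hinj, card_univ,
    Fintype.card_fin]

theorem two_mul_card_edgeFinset_cubeGraph : 2 * #(cubeGraph n).edgeFinset = n * 2 ^ n := by
  rw [← SimpleGraph.sum_degrees_eq_twice_card_edges]
  simp [cubeGraph_degree, mul_comm]

end CubeGraph

section Faces

variable {n : ℕ}

def freeCoords (x : Fin n → Option Bool) : Finset (Fin n) := {j | x j = none}

@[simp]
theorem mem_freeCoords {x : Fin n → Option Bool} {j : Fin n} :
    j ∈ freeCoords x ↔ x j = none := by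
  simp [freeCoords]

theorem card_freeCoords (x : TwoFace n) : #(freeCoords x.1) = 2 := x.2

def faceThrough (u : Fin n → Bool) (S : Finset (Fin n)) : Fin n → Option Bool :=
  fun j => if j ∈ S then none else some (u j)

@[simp]
theorem freeCoords_faceThrough (u : Fin n → Bool) (S : Finset (Fin n)) :
    freeCoords (faceThrough u S) = S := by
  ext j
  by_cases hj : j ∈ S <;> simp [faceThrough, hj]

theorem inFace_faceThrough_iff {u t : Fin n → Bool} {S : Finset (Fin n)} :
    inFace (faceThrough u S) t ↔ ∀ j ∉ S, t j = u j := by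
  refine ⟨fun ht j hj => ht j (u j) (if_neg hj), fun ht j b hjb => ?_⟩
  by_cases hj : j ∈ S
  · simp [faceThrough, hj] at hjb
  · simp only [faceThrough, hj, if_false, Option.some.injEq] at hjb
    rw [ht j hj, hjb]

theorem eq_faceThrough_of_inFace {x : Fin n → Option Bool} {u : Fin n → Bool}
    (hu : inFace x u) : x = faceThrough u (freeCoords x) := by
  funext j
  cases hj : x j with
  | none => simp [faceThrough, hj]
  | some b => simp [faceThrough, hj, hu j b hj]

theorem eq_of_inFace_of_eqOn_freeCoords {x : Fin n → Option Bool} {t t' : Fin n → Bool}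
    (ht : inFace x t) (ht' : inFace x t') (h : ∀ j ∈ freeCoords x, t j = t' j) : t = t' := by
  funext j
  cases hj : x j with
  | none => exact h j (mem_freeCoords.2 hj)
  | some b => rw [ht j b hj, ht' j b hj]

theorem exists_freeCoords_eq_pair (x : TwoFace n) {i : Fin n} (hi : x.1 i = none) :
    ∃ k, k ≠ i ∧ freeCoords x.1 = {i, k} := by
  have hi' : i ∈ freeCoords x.1 := mem_freeCoords.2 hi
  obtain ⟨k, hk⟩ := card_eq_one.1 (by rw [card_erase_of_mem hi', card_freeCoords] :
    #((freeCoords x.1).erase i) = 1)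
  exact ⟨k, ne_of_mem_erase (hk ▸ mem_singleton_self k), by rw [← insert_erase hi', hk]⟩

theorem freeCoords_eq_of_three_vertices (x : TwoFace n) {u v w : Fin n → Bool} (huv : u ≠ v)
    (huw : u ≠ w) (hvw : v ≠ w) (hu : inFace x.1 u) (hv : inFace x.1 v) (hw : inFace x.1 w) :
    freeCoords x.1 = ({j | ¬(u j = v j ∧ u j = w j)} : Finset (Fin n)) := by
  ext j
  simp only [mem_freeCoords, mem_filter, mem_univ, true_and]
  constructor
  · rintro hj ⟨hjuv, hjuw⟩
    obtain ⟨k, -, hk⟩ := exists_freeCoords_eq_pair x hj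
    have agree : ∀ {s t : Fin n → Bool}, inFace x.1 s → inFace x.1 t → s j = t j → s k = t k →
        s = t := fun hs ht hsj hsk =>
      eq_of_inFace_of_eqOn_freeCoords hs ht (by simp [hk, hsj, hsk])
    have pigeonhole : u k = v k ∨ u k = w k ∨ v k = w k := by
      cases u k <;> cases v k <;> cases w k <;> simp
    rcases pigeonhole with h | h | h
    · exact huv (agree hu hv hjuv h)
    · exact huw (agree hu hw hjuw h)
    · exact hvw (agree hv hw (hjuv.symm.trans hjuw) h)
  · intro hj
    cases hx : x.1 j with
    | none => rfl
    | some b => exact absurd ⟨(hu j b hx).trans (hv j b hx).symm,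
        (hu j b hx).trans (hw j b hx).symm⟩ hj

theorem TwoFace.eq_of_three_vertices {x y : TwoFace n} {u v w : Fin n → Bool} (huv : u ≠ v)
    (huw : u ≠ w) (hvw : v ≠ w) (hxu : inFace x.1 u) (hxv : inFace x.1 v) (hxw : inFace x.1 w)
    (hyu : inFace y.1 u) (hyv : inFace y.1 v) (hyw : inFace y.1 w) : x = y := by
  apply Subtype.ext
  rw [eq_faceThrough_of_inFace hxu, eq_faceThrough_of_inFace hyu,
    freeCoords_eq_of_three_vertices x huv huw hvw hxu hxv hxw,
    freeCoords_eq_of_three_vertices y huv huw hvw hyu hyv hyw]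

theorem card_filter_inFace_le_four (x : TwoFace n) : #{t | inFace x.1 t} ≤ 4 := by
  obtain ⟨a, b, -, hab⟩ := card_eq_two.1 (card_freeCoords x)
  have hinj : Set.InjOn (fun t : Fin n → Bool => (t a, t b)) ↑({t | inFace x.1 t} : Finset _) := by
    intro t ht t' ht' htt'
    simp only [coe_filter, mem_univ, true_and, Prod.mk.injEq] at ht ht' htt'
    exact eq_of_inFace_of_eqOn_freeCoords ht ht' (by simp [hab, htt'])
  simpa using card_le_card_of_injOn (t := univ) _ (fun _ _ => mem_coe.2 (mem_univ _)) hinj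

end Faces

section EdgeFaces

variable {n : ℕ}

def edgeFaces (e : Sym2 (Fin n → Bool)) : Finset (TwoFace n) := {x | ∀ v ∈ e, inFace x.1 v}

theorem mem_edgeFaces_mk {x : TwoFace n} {u v : Fin n → Bool} :
    x ∈ edgeFaces s(u, v) ↔ inFace x.1 u ∧ inFace x.1 v := by
  simp [edgeFaces]

theorem maximalCount_eq_card (ω : TwoFace n → Bool) :
    maximalCount n ω = #{e ∈ (cubeGraph n).edgeFinset | ∀ x ∈ edgeFaces e, ω x = false} := by
  unfold maximalCount
  congr 1
  refine filter_congr fun e _ => forall_congr' fun x => ?_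
  cases ω x <;> simp [edgeFaces]

/-- The squares through the edge from `u` in direction `i` are the faces through `u` with free
coordinates `{i, k}`, `k ≠ i`. -/
theorem card_edgeFaces {e : Sym2 (Fin n → Bool)} (he : e ∈ (cubeGraph n).edgeFinset) :
    #(edgeFaces e) = n - 1 := by
  induction e using Sym2.inductionOn with | hf u v =>
  rw [SimpleGraph.mem_edgeFinset, SimpleGraph.mem_edgeSet] at he
  obtain ⟨i, rfl⟩ := cubeGraph_adj_iff.1 he
  have hflip : ∀ j ≠ i, Function.update u i (!u i) j = u j := fun j hj =>
    Function.update_of_ne hj _ _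
  have hcard : #(univ.erase i) = n - 1 := by rw [card_erase_of_mem (mem_univ i), card_fin]
  rw [← hcard]
  symm
  refine card_bij (fun k hk => ⟨faceThrough u {i, k}, by
      change #(freeCoords _) = 2
      rw [freeCoords_faceThrough, card_pair (Ne.symm (ne_of_mem_erase hk))]⟩) ?_ ?_ ?_
  · exact fun k _ => mem_edgeFaces_mk.2 ⟨inFace_faceThrough_iff.2 fun _ _ => rfl,
      inFace_faceThrough_iff.2 fun j hj => hflip j fun hji => hj (hji ▸ mem_insert_self i {k})⟩
  · intro k hk k' hk' hkk'
    have hpair := congrArg (fun x : TwoFace n => freeCoords x.1) hkk'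
    simp only [freeCoords_faceThrough] at hpair
    have hk_mem : k ∈ ({i, k'} : Finset (Fin n)) := hpair ▸ mem_insert_of_mem (mem_singleton_self k)
    simpa [ne_of_mem_erase hk] using hk_mem
  · intro x hx
    obtain ⟨hxu, hxv⟩ := mem_edgeFaces_mk.1 hx
    have hi : x.1 i = none := by
      cases hxi : x.1 i with
      | none => rfl
      | some b =>
        have h := (hxv i b hxi).trans (hxu i b hxi).symm
        simp at h
    obtain ⟨k, hki, hk⟩ := exists_freeCoords_eq_pair x hi
    exact ⟨k, mem_erase.2 ⟨hki, mem_univ k⟩,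
      Subtype.ext (by rw [eq_faceThrough_of_inFace hxu, hk])⟩

theorem sum_pow_card_edgeFaces (r : ℝ) :
    ∑ e ∈ (cubeGraph n).edgeFinset, r ^ #(edgeFaces e) =
      #(cubeGraph n).edgeFinset * r ^ (n - 1) := by
  rw [sum_congr rfl fun e he => by rw [card_edgeFaces he], sum_const, nsmul_eq_mul]

theorem card_inter_edgeFaces_le_one {e f : Sym2 (Fin n → Bool)}
    (he : e ∈ (cubeGraph n).edgeFinset) (hf : f ∈ (cubeGraph n).edgeFinset) (hef : e ≠ f) :
    #(edgeFaces e ∩ edgeFaces f) ≤ 1 := by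
  induction e using Sym2.inductionOn with | hf u v =>
  induction f using Sym2.inductionOn with | hf w z =>
  have huv : u ≠ v := (SimpleGraph.mem_edgeSet _).1 (SimpleGraph.mem_edgeFinset.1 he) |>.ne
  have hwz : w ≠ z := (SimpleGraph.mem_edgeSet _).1 (SimpleGraph.mem_edgeFinset.1 hf) |>.ne
  have hout : w ∉ s(u, v) ∨ z ∉ s(u, v) :=
    not_and_or.1 fun h => hef ((Sym2.mem_and_mem_iff hwz).1 h)
  rw [card_le_one]
  intro x hx y hy
  simp only [mem_inter, mem_edgeFaces_mk] at hx hy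
  rcases hout with ht | ht <;>
  · simp only [Sym2.mem_iff, not_or] at ht
    exact TwoFace.eq_of_three_vertices huv (Ne.symm ht.1) (Ne.symm ht.2)
      hx.1.1 hx.1.2 (by tauto) hy.1.1 hy.1.2 (by tauto)

theorem card_filter_mem_edgeFaces_le (x : TwoFace n) :
    #{e ∈ (cubeGraph n).edgeFinset | x ∈ edgeFaces e} ≤ 10 := by
  have hsub : {e ∈ (cubeGraph n).edgeFinset | x ∈ edgeFaces e} ⊆
      ({t | inFace x.1 t} : Finset _).sym2 := by
    intro e he
    rw [mem_sym2_iff]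
    intro t ht
    simpa using (mem_filter.1 (mem_filter.1 he).2).2 t ht
  calc _ ≤ _ := card_le_card hsub
    _ = (#{t | inFace x.1 t} + 1).choose 2 := card_sym2 _
    _ ≤ (4 + 1).choose 2 :=
        Nat.choose_le_choose 2 (Nat.add_le_add_right (card_filter_inFace_le_four x) 1)
    _ = 10 := rfl

theorem card_filter_not_disjoint_edgeFaces_le {e : Sym2 (Fin n → Bool)}
    (he : e ∈ (cubeGraph n).edgeFinset) :
    #{f ∈ (cubeGraph n).edgeFinset | f ≠ e ∧ ¬Disjoint (edgeFaces e) (edgeFaces f)} ≤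
      10 * (n - 1) := by
  have hsub : {f ∈ (cubeGraph n).edgeFinset | f ≠ e ∧ ¬Disjoint (edgeFaces e) (edgeFaces f)} ⊆
      (edgeFaces e).biUnion fun x => {f ∈ (cubeGraph n).edgeFinset | x ∈ edgeFaces f} := by
    intro f hf
    obtain ⟨hfE, -, hd⟩ := mem_filter.1 hf
    obtain ⟨x, hxe, hxf⟩ := not_disjoint_iff.1 hd
    exact mem_biUnion.2 ⟨x, hxe, mem_filter.2 ⟨hfE, hxf⟩⟩
  calc _ ≤ _ := card_le_card hsub
    _ ≤ _ := card_biUnion_le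
    _ ≤ #(edgeFaces e) • 10 := sum_le_card_nsmul _ _ _ fun x _ => card_filter_mem_edgeFaces_le x
    _ = 10 * (n - 1) := by rw [card_edgeFaces he, smul_eq_mul, mul_comm]

variable {r : ℝ}

theorem pow_card_union_edgeFaces_le (hr : 1 / 2 ≤ r) (hr1 : r ≤ 1)
    {e f : Sym2 (Fin n → Bool)} (he : e ∈ (cubeGraph n).edgeFinset)
    (hf : f ∈ (cubeGraph n).edgeFinset) (hef : e ≠ f) :
    r ^ #(edgeFaces e ∪ edgeFaces f) ≤ 2 * (r ^ (n - 1)) ^ 2 := by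
  have hU : 2 * (n - 1) ≤ #(edgeFaces e ∪ edgeFaces f) + 1 := by
    have := card_union_add_card_inter (edgeFaces e) (edgeFaces f)
    have := card_inter_edgeFaces_le_one he hf hef
    rw [card_edgeFaces he, card_edgeFaces hf] at *
    omega
  calc r ^ #(edgeFaces e ∪ edgeFaces f)
      ≤ r ^ #(edgeFaces e ∪ edgeFaces f) * (2 * r) :=
        le_mul_of_one_le_right (pow_nonneg (by linarith) _) (by linarith)
    _ = 2 * r ^ (#(edgeFaces e ∪ edgeFaces f) + 1) := by ring
    _ ≤ 2 * r ^ (2 * (n - 1)) :=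
        mul_le_mul_of_nonneg_left (pow_le_pow_of_le_one (by linarith) hr1 hU) zero_le_two
    _ = 2 * (r ^ (n - 1)) ^ 2 := by ring

theorem sum_sum_pow_card_union_edgeFaces_le (hr : 1 / 2 ≤ r) (hr1 : r ≤ 1) :
    ∑ e ∈ (cubeGraph n).edgeFinset,
        ∑ f ∈ (cubeGraph n).edgeFinset with f ≠ e ∧ ¬Disjoint (edgeFaces e) (edgeFaces f),
          r ^ #(edgeFaces e ∪ edgeFaces f) ≤
      #(cubeGraph n).edgeFinset * (10 * (n - 1 : ℕ) * (2 * (r ^ (n - 1)) ^ 2)) := by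
  rw [← nsmul_eq_mul]
  refine sum_le_card_nsmul _ _ _ fun e he => ?_
  calc _ ≤ #{f ∈ (cubeGraph n).edgeFinset | f ≠ e ∧ ¬Disjoint (edgeFaces e) (edgeFaces f)} •
        (2 * (r ^ (n - 1)) ^ 2) := by
        refine sum_le_card_nsmul _ _ _ fun f hf => ?_
        obtain ⟨hfE, hfe, -⟩ := mem_filter.1 hf
        exact pow_card_union_edgeFaces_le hr hr1 he hfE (Ne.symm hfe)
    _ ≤ ((10 * (n - 1) : ℕ) : ℝ) * (2 * (r ^ (n - 1)) ^ 2) := by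
        rw [nsmul_eq_mul]
        gcongr
        exact card_filter_not_disjoint_edgeFaces_le he
    _ = _ := by push_cast; ring

end EdgeFaces

section MaximalEdges

variable {n : ℕ} {p : ℝ}

theorem sum_faceProb_filter_forall_false (S : Finset (TwoFace n)) :
    ∑ ω ∈ univ.filter (fun ω => ∀ x ∈ S, ω x = false), faceProb n p ω = (1 - p) ^ #S :=
  sum_prod_bernoulli_filter_forall_false p S

theorem sum_faceProb : ∑ ω, faceProb n p ω = 1 := by
  simpa using sum_faceProb_filter_forall_false (n := n) (p := p) ∅

theorem faceProb_nonneg (hp0 : 0 ≤ p) (hp1 : p ≤ 1) (ω : TwoFace n → Bool) :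
    0 ≤ faceProb n p ω :=
  prod_nonneg fun x _ => by split_ifs <;> linarith

theorem sum_faceProb_mul_maximalCount :
    ∑ ω, faceProb n p ω * maximalCount n ω =
      #(cubeGraph n).edgeFinset * (1 - p) ^ (n - 1) := by
  simp only [maximalCount_eq_card]
  rw [sum_mul_card_filter_forall_false _ _ sum_faceProb_filter_forall_false,
    sum_pow_card_edgeFaces]

theorem sum_faceProb_mul_maximalCount_sq_sub_sq_le (hp0 : 0 ≤ p) (hp : p ≤ 1 / 2) :
    ∑ ω, faceProb n p ω * (maximalCount n ω : ℝ) ^ 2 -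
        (#(cubeGraph n).edgeFinset * (1 - p) ^ (n - 1)) ^ 2 ≤
      #(cubeGraph n).edgeFinset * (1 - p) ^ (n - 1) +
        #(cubeGraph n).edgeFinset * (10 * (n - 1 : ℕ) * (2 * ((1 - p) ^ (n - 1)) ^ 2)) := by
  simp only [maximalCount_eq_card]
  rw [sum_mul_card_filter_forall_false_sq _ _ sum_faceProb_filter_forall_false,
    ← sum_pow_card_edgeFaces]
  refine (sum_sum_pow_card_union_sub_sq_le _ _ (by linarith)).trans ?_
  gcongr
  exact sum_sum_pow_card_union_edgeFaces_le (by linarith) (by linarith)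

theorem sum_faceProb_filter_maximalCount_lt_two_le (hn : 2 ≤ n) (hp0 : 0 ≤ p)
    (hp : p ≤ 1 / 2) :
    ∑ ω ∈ univ.filter (fun ω => ¬2 ≤ maximalCount n ω), faceProb n p ω ≤ 4 / n + 160 / 2 ^ n := by
  have hN : 2 * (#(cubeGraph n).edgeFinset : ℝ) = n * 2 ^ n := by
    exact_mod_cast two_mul_card_edgeFinset_cubeGraph
  set N : ℝ := (#(cubeGraph n).edgeFinset : ℝ)
  set q := (1 - p) ^ (n - 1)
  have h2n : (2 : ℝ) ^ n = 2 * 2 ^ (n - 1) := by rw [← pow_succ', Nat.sub_add_cancel (by omega)]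
  have hq : 1 ≤ 2 ^ (n - 1) * q := by rw [← mul_pow]; exact one_le_pow₀ (by linarith)
  have hn' : (2 : ℝ) ≤ n := by exact_mod_cast hn
  have hNpos : 0 < N := by nlinarith [pow_pos (two_pos : (0 : ℝ) < 2) (n - 1)]
  have hmean : (n : ℝ) ≤ N * q := by nlinarith [pow_pos (two_pos : (0 : ℝ) < 2) (n - 1)]
  have hfilter : univ.filter (fun ω => ¬2 ≤ maximalCount n ω) =
      univ.filter (fun ω => (maximalCount n ω : ℝ) ≤ 1) := by
    refine filter_congr fun ω _ => ?_
    rw [not_le, Nat.lt_succ_iff, ← Nat.cast_le (α := ℝ), Nat.cast_one]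
  have hcheb := sum_filter_le_mul_sq_le_variance (X := fun ω => (maximalCount n ω : ℝ))
    (faceProb_nonneg hp0 (by linarith)) sum_faceProb (t := 1)
    (by rw [sum_faceProb_mul_maximalCount]; linarith)
  rw [sum_faceProb_mul_maximalCount, ← hfilter] at hcheb
  have hc : 0 ≤ 20 * ((n - 1 : ℕ) : ℝ) / N := by positivity
  calc _ ≤ 4 / (N * q) + 4 * (20 * ((n - 1 : ℕ) : ℝ) / N) := by
        refine le_four_div_add_four_mul_of_mul_sub_one_sq_le (by linarith) hc
          (hcheb.trans ((sum_faceProb_mul_maximalCount_sq_sub_sq_le hp0 hp).trans_eq ?_))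
        field_simp
        ring
    _ ≤ 4 / n + 160 / 2 ^ n := by
        refine add_le_add (div_le_div_of_nonneg_left zero_le_four (by positivity) hmean) ?_
        rw [Nat.cast_sub (by omega), Nat.cast_one, mul_div_assoc', div_le_div_iff₀ hNpos
          (by positivity)]
        nlinarith

end MaximalEdges

/-- For fixed `p ≤ 1/2`, with probability tending to `1` as `n → ∞`, the random cubical
complex `Q_2(n,p)` contains at least two maximal 1-faces. -/
theorem at_least_two_maximal_edges_whp (p : ℝ) (hp0 : 0 ≤ p) (hp : p ≤ 1 / 2) :
    Filter.Tendsto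
      (fun n : ℕ =>
        ∑ ω ∈ Finset.univ.filter fun ω : TwoFace n → Bool => 2 ≤ maximalCount n ω,
          faceProb n p ω)
      Filter.atTop (nhds 1) := by
  have hcompl : ∀ n, ∑ ω ∈ univ.filter (fun ω => 2 ≤ maximalCount n ω), faceProb n p ω =
      1 - ∑ ω ∈ univ.filter (fun ω => ¬2 ≤ maximalCount n ω), faceProb n p ω := fun n => by
    rw [← sum_faceProb (n := n) (p := p),
      ← sum_filter_add_sum_filter_not univ fun ω => 2 ≤ maximalCount n ω]
    ring
  have hbound : Filter.Tendsto (fun n : ℕ => 4 / (n : ℝ) + 160 / 2 ^ n) Filter.atTop (nhds 0) := by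
    simpa using (tendsto_const_div_atTop_nhds_zero_nat (4 : ℝ)).add
      ((tendsto_const_nhds (x := (160 : ℝ))).div_atTop
        (tendsto_pow_atTop_atTop_of_one_lt one_lt_two))
  have hsmall := squeeze_zero'
    (Filter.Eventually.of_forall fun n => sum_nonneg fun ω _ => faceProb_nonneg hp0 (by linarith) ω)
    (Filter.eventually_atTop.2
      ⟨2, fun n hn => sum_faceProb_filter_maximalCount_lt_two_le hn hp0 hp⟩)
    hbound
  simpa [hcompl] using tendsto_const_nhds.sub hsmall
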